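/- arXiv:1207.2891 — 2 statements merged into one kernel-verified Lean document; each statement's English description precedes it below -/
import Mathlib

section
/- Suppose A is a seminormal cancellative pointed monoid, and let I be the conductor ideal of the inclusion A ↪ A_nor (i.e., I = {a ∈ A | A_nor · a ⊆ A}). Then I is a radical ideal of both A and A_nor. -/
universe u v

namespace ToricMonoid

/-- An ideal of a pointed commutative monoid (= commutative monoid with absorbing zero). -/
def IsIdeal {A : Type u} [CommMonoidWithZero A] (I : Set A) : Prop :=
  (0 : A) ∈ I ∧ ∀ a x : A, x ∈ I → a * x ∈ I

/-- A prime ideal: a proper ideal whose complement is multiplicatively closed. -/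
def IsPrimeIdeal {A : Type u} [CommMonoidWithZero A] (p : Set A) : Prop :=
  IsIdeal p ∧ (1 : A) ∉ p ∧ ∀ a b : A, a ∉ p → b ∉ p → a * b ∉ p

/-- The radical of an ideal. -/
def mradical {A : Type u} [CommMonoidWithZero A] (I : Set A) : Set A :=
  {a : A | ∃ n : ℕ, 1 ≤ n ∧ a ^ n ∈ I}

/-- The nilradical: elements with some power equal to zero. -/
def mnilradical (A : Type u) [CommMonoidWithZero A] : Set A :=
  {a : A | ∃ n : ℕ, 1 ≤ n ∧ a ^ n = 0}

/-- A pointed monoid is cancellative if `a*c = b*c` with `c ≠ 0` implies `a = b`. -/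
def IsCancellative (A : Type u) [CommMonoidWithZero A] : Prop :=
  ∀ a b c : A, c ≠ 0 → a * c = b * c → a = b

/-- Torsionfree: `aⁿ = bⁿ` for some `n ≥ 1` implies `a = b`. -/
def IsTorsionfree (A : Type u) [CommMonoidWithZero A] : Prop :=
  ∀ (a b : A) (n : ℕ), 1 ≤ n → a ^ n = b ^ n → a = b

/-- Reduced: `xⁿ = yⁿ` for all sufficiently large `n` implies `x = y`. -/
def IsReducedMonoid (A : Type u) [CommMonoidWithZero A] : Prop :=
  ∀ x y : A, (∃ N : ℕ, ∀ n ≥ N, x ^ n = y ^ n) → x = y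

/-- Seminormal: reduced, and `x³ = y²` implies `x = z², y = z³` for some `z`. -/
def IsSeminormal (A : Type u) [CommMonoidWithZero A] : Prop :=
  IsReducedMonoid A ∧ ∀ x y : A, x ^ 3 = y ^ 2 → ∃ z : A, x = z ^ 2 ∧ y = z ^ 3

/-- Normal (for a cancellative monoid, phrased internally): whenever a fraction `a/b`
(with `b ≠ 0`) of the pointed group completion satisfies `(a/b)ⁿ = c ∈ A` (i.e.
`aⁿ = bⁿ * c`) for some `n ≥ 1` and `c ≠ 0`, the fraction already lies in `A`
(i.e. `a = b * x` for some `x`). -/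
def IsNormalMonoid (A : Type u) [CommMonoidWithZero A] : Prop :=
  ∀ a b c : A, b ≠ 0 → c ≠ 0 → (∃ n : ℕ, 1 ≤ n ∧ a ^ n = b ^ n * c) →
    ∃ x : A, a = b * x

/-- A morphism of pointed monoids. -/
def IsMonoidHom {A : Type u} {B : Type v} [CommMonoidWithZero A] [CommMonoidWithZero B]
    (f : A → B) : Prop :=
  f 0 = 0 ∧ f 1 = 1 ∧ ∀ a b : A, f (a * b) = f a * f b

/-- `f : A → B` presents `B` as the quotient monoid `A/I` collapsing the ideal `I` to `0`. -/
def IsQuotientMap {A : Type u} {B : Type v} [CommMonoidWithZero A] [CommMonoidWithZero B]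
    (I : Set A) (f : A → B) : Prop :=
  IsMonoidHom f ∧ Function.Surjective f ∧ (∀ x : A, f x = 0 ↔ x ∈ I) ∧
    ∀ a b : A, f a = f b ↔ (a = b ∨ (a ∈ I ∧ b ∈ I))

/-- Partially cancellative: isomorphic to `C/I` with `C` cancellative and `I` an ideal. -/
def IsPC (A : Type u) [CommMonoidWithZero A] : Prop :=
  ∃ (C : Type u) (iC : CommMonoidWithZero C) (I : Set C) (f : C → A),
    @IsCancellative C iC ∧ @IsIdeal C iC I ∧ @IsQuotientMap C A iC inferInstance I f

/-- Partially cancellative torsionfree: isomorphic to `C/I` with `C` cancellative and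
torsionfree and `I` an ideal. -/
def IsPCTF (A : Type u) [CommMonoidWithZero A] : Prop :=
  ∃ (C : Type u) (iC : CommMonoidWithZero C) (I : Set C) (f : C → A),
    @IsCancellative C iC ∧ @IsTorsionfree C iC ∧ @IsIdeal C iC I ∧
      @IsQuotientMap C A iC inferInstance I f

/-- A multiplicatively closed subset. -/
def MulClosed {A : Type u} [CommMonoidWithZero A] (S : Set A) : Prop :=
  (1 : A) ∈ S ∧ ∀ a b : A, a ∈ S → b ∈ S → a * b ∈ S

/-- `f : A → B` presents `B` as the localization `S⁻¹A`. -/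
def IsLocalizationMap {A : Type u} {B : Type v} [CommMonoidWithZero A] [CommMonoidWithZero B]
    (S : Set A) (f : A → B) : Prop :=
  IsMonoidHom f ∧ (∀ s ∈ S, IsUnit (f s)) ∧
    (∀ b : B, ∃ a : A, ∃ s ∈ S, b * f s = f a) ∧
    (∀ a a' : A, f a = f a' ↔ ∃ u ∈ S, a * u = a' * u)

/-- `i : A → B` is a seminormalization of `A`: `B` is seminormal, the induced map
`A_red → B` is injective (`i a = i a'` iff `aⁿ = a'ⁿ` for all `n ≫ 0`), and every
`b ∈ B` has `bⁿ` in the image of `A` for all `n ≫ 0`. -/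
def IsSeminormalization {A : Type u} {B : Type v} [CommMonoidWithZero A] [CommMonoidWithZero B]
    (i : A → B) : Prop :=
  IsMonoidHom i ∧ IsSeminormal B ∧
    (∀ a a' : A, i a = i a' ↔ ∃ N : ℕ, ∀ n ≥ N, a ^ n = a' ^ n) ∧
    ∀ b : B, ∃ N : ℕ, ∀ n ≥ N, ∃ a : A, b ^ n = i a

/-- `j : A → G` presents the pointed group `G` as the pointed group completion `A⁺` of a
cancellative pointed monoid `A`. -/
def IsGroupCompletion {A : Type u} {G : Type v} [CommMonoidWithZero A] [CommGroupWithZero G]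
    (j : A → G) : Prop :=
  IsMonoidHom j ∧ Function.Injective j ∧
    ∀ g : G, g ≠ 0 → ∃ a b : A, a ≠ 0 ∧ b ≠ 0 ∧ g = j a / j b

/-- Inside a group completion `j : A → G`: the seminormalization
`A_sn = {g | gⁿ ∈ A for all n ≫ 0}`. -/
def snSet {A : Type u} {G : Type v} [CommMonoidWithZero A] [CommGroupWithZero G]
    (j : A → G) : Set G :=
  {g : G | ∃ N : ℕ, ∀ n ≥ N, g ^ n ∈ Set.range j}

/-- Inside a group completion `j : A → G`: the normalization
`A_nor = {g | gⁿ ∈ A for some n ≥ 1}`. -/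
def norSet {A : Type u} {G : Type v} [CommMonoidWithZero A] [CommGroupWithZero G]
    (j : A → G) : Set G :=
  {g : G | ∃ n : ℕ, 1 ≤ n ∧ g ^ n ∈ Set.range j}

/-- The conductor ideal of `A ⊆ A_nor` (inside the group completion `G`). -/
def condSet {A : Type u} {G : Type v} [CommMonoidWithZero A] [CommGroupWithZero G]
    (j : A → G) : Set G :=
  {g : G | g ∈ Set.range j ∧ ∀ h ∈ norSet j, h * g ∈ Set.range j}

/-- The prime spectrum of a pointed monoid. -/
def MSpec (A : Type u) [CommMonoidWithZero A] : Type u := {p : Set A // IsPrimeIdeal p}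

/-- The Zariski topology on `MSpec A`: closed sets are `V(I) = {p | I ⊆ p}`. -/
instance {A : Type u} [CommMonoidWithZero A] : TopologicalSpace (MSpec A) :=
  TopologicalSpace.generateFrom
    {U : Set (MSpec A) | ∃ I : Set A, IsIdeal I ∧ U = {p : MSpec A | ¬ I ⊆ p.1}}

/-- The product `c n * c (n+1) * ⋯ * c (k-1)` of dilation exponents from stage `n`
to stage `k`. -/
def transPow (c : ℕ → ℕ) (n k : ℕ) : ℕ := (Finset.Ico n k).prod c

/-- `ℓ : ℕ → A → L` presents `L` as the colimit `A^𝔠` of `A →^{θ_{c₀}} A →^{θ_{c₁}} ⋯`,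
where `θ_c a = a^c` is dilation. -/
def IsDilatedColimit {A : Type u} {L : Type v} [CommMonoidWithZero A] [CommMonoidWithZero L]
    (c : ℕ → ℕ) (ℓ : ℕ → A → L) : Prop :=
  (∀ n : ℕ, IsMonoidHom (ℓ n)) ∧
  (∀ (n : ℕ) (a : A), ℓ (n + 1) (a ^ c n) = ℓ n a) ∧
  (∀ x : L, ∃ (n : ℕ) (a : A), ℓ n a = x) ∧
  ∀ (n m : ℕ) (a b : A), ℓ n a = ℓ m b ↔
    ∃ k : ℕ, n ≤ k ∧ m ≤ k ∧ a ^ transPow c n k = b ^ transPow c m k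

section Aux

variable {A : Type u} {G : Type v} [CommMonoidWithZero A] [CommGroupWithZero G]

lemma aux_sq_cube {a b : G} (h2 : a ^ 2 = b ^ 2) (h3 : a ^ 3 = b ^ 3) : a = b := by
  by_cases hb : b = 0
  · subst hb
    have : a ^ 2 = 0 := by simpa using h2
    exact pow_eq_zero_iff (by norm_num : (2:ℕ) ≠ 0) |>.mp this
  · have ha2 : a ^ 2 ≠ 0 := by rw [h2]; exact pow_ne_zero _ hb
    apply mul_left_cancel₀ ha2
    calc a ^ 2 * a = a ^ 3 := (pow_succ a 2).symm
    _ = b ^ 3 := h3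
    _ = b ^ 2 * b := pow_succ b 2
    _ = a ^ 2 * b := by rw [h2]

lemma hom_pow {f : A → G} (hf : IsMonoidHom f) (a : A) : ∀ n : ℕ, f (a ^ n) = f a ^ n := by
  intro n
  induction n with
  | zero => simpa using hf.2.1
  | succ k ih => rw [pow_succ, hf.2.2, ih, pow_succ]

lemma range_mul {j : A → G} (hj : IsGroupCompletion j) {x y : G}
    (hx : x ∈ Set.range j) (hy : y ∈ Set.range j) : x * y ∈ Set.range j := by
  obtain ⟨u, hu⟩ := hx
  obtain ⟨v, hv⟩ := hy
  exact ⟨u * v, by rw [hj.1.2.2, hu, hv]⟩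

lemma range_pow {j : A → G} (hj : IsGroupCompletion j) {x : G}
    (hx : x ∈ Set.range j) (n : ℕ) : x ^ n ∈ Set.range j := by
  obtain ⟨u, hu⟩ := hx
  exact ⟨u ^ n, by rw [hom_pow hj.1, hu]⟩

lemma one_mem_nor {j : A → G} (hj : IsGroupCompletion j) : (1 : G) ∈ norSet j :=
  ⟨1, le_refl 1, 1, by rw [hj.1.2.1, pow_one]⟩

lemma nor_mul {j : A → G} (hj : IsGroupCompletion j) {g h : G}
    (hg : g ∈ norSet j) (hh : h ∈ norSet j) : g * h ∈ norSet j := by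
  obtain ⟨a, ha1, hga⟩ := hg
  obtain ⟨b, hb1, hhb⟩ := hh
  refine ⟨a * b, Nat.one_le_iff_ne_zero.mpr (by positivity), ?_⟩
  have : (g * h) ^ (a * b) = (g ^ a) ^ b * (h ^ b) ^ a := by
    rw [mul_pow, ← pow_mul, ← pow_mul, mul_comm a b]
  rw [this]
  exact range_mul hj (range_pow hj hga b) (range_pow hj hhb a)

lemma nor_pow {j : A → G} (hj : IsGroupCompletion j) {g : G}
    (hg : g ∈ norSet j) (m : ℕ) : g ^ m ∈ norSet j := by
  rcases Nat.eq_zero_or_pos m with hm | hm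
  · subst hm; simpa using one_mem_nor hj
  obtain ⟨a, ha1, hga⟩ := hg
  refine ⟨a, ha1, ?_⟩
  have : (g ^ m) ^ a = (g ^ a) ^ m := by rw [← pow_mul, ← pow_mul, mul_comm]
  rw [this]
  exact range_pow hj hga m

lemma half_pow {j : A → G} (hj : IsGroupCompletion j) (hsn : IsSeminormal A)
    {g : G} (k : ℕ) (h2 : g ^ (2 * k) ∈ Set.range j) (h3 : g ^ (3 * k) ∈ Set.range j) :
    g ^ k ∈ Set.range j := by
  obtain ⟨u, hu⟩ := h2
  obtain ⟨v, hv⟩ := h3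
  have huv : u ^ 3 = v ^ 2 := by
    apply hj.2.1
    rw [hom_pow hj.1, hom_pow hj.1, hu, hv, ← pow_mul, ← pow_mul]
    have : 2 * k * 3 = 3 * k * 2 := by ring
    rw [this]
  obtain ⟨z, hz2, hz3⟩ := hsn.2 u v huv
  refine ⟨z, ?_⟩
  apply aux_sq_cube
  · rw [← hom_pow hj.1, ← hz2, hu, ← pow_mul, mul_comm]
  · rw [← hom_pow hj.1, ← hz3, hv, ← pow_mul, mul_comm]

lemma sn_mem_range {j : A → G} (hj : IsGroupCompletion j) (hsn : IsSeminormal A)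
    (g : G) : ∀ N : ℕ, (∀ n ≥ N, g ^ n ∈ Set.range j) → g ∈ Set.range j := by
  intro N
  induction N using Nat.strong_induction_on with
  | _ N ih =>
    intro h
    rcases le_or_gt N 1 with hN | hN
    · simpa using h 1 hN
    · apply ih ((N + 1) / 2) (by omega)
      intro n hn
      have := half_pow hj hsn n (h (2 * n) (by omega)) (h (3 * n) (by omega))
      exact this

end Aux

/-- Suppose `A` is seminormal and cancellative, with group completion
`j : A → G` and conductor ideal `I = {a ∈ A | A_nor · a ⊆ A}` of `A ↪ A_nor`.  Then `I`
is a radical ideal of both `A` and `A_nor`. -/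
theorem conductor_is_radical {A : Type u} {G : Type v}
    [CommMonoidWithZero A] [CommGroupWithZero G]
    (hc : IsCancellative A) (hsn : IsSeminormal A)
    (j : A → G) (hj : IsGroupCompletion j) :
    (∀ a : A, (∃ n : ℕ, 1 ≤ n ∧ j (a ^ n) ∈ condSet j) → j a ∈ condSet j) ∧
    (∀ x ∈ norSet j, (∃ n : ℕ, 1 ≤ n ∧ x ^ n ∈ condSet j) → x ∈ condSet j) := by
  have part2 : ∀ x ∈ norSet j, (∃ n : ℕ, 1 ≤ n ∧ x ^ n ∈ condSet j) → x ∈ condSet j := by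
    rintro x hx ⟨n, hn1, hxn⟩
    have key : ∀ h ∈ norSet j, h * x ∈ Set.range j := by
      intro h hh
      apply sn_mem_range hj hsn (h * x) n
      intro m hm
      have hsplit : (h * x) ^ m = (h ^ m * x ^ (m - n)) * x ^ n := by
        rw [mul_pow, mul_assoc, ← pow_add]
        congr 2
        omega
      rw [hsplit]
      exact hxn.2 _ (nor_mul hj (nor_pow hj hh m) (nor_pow hj hx (m - n)))
    have hx_range : x ∈ Set.range j := by
      have := key 1 (one_mem_nor hj)
      simpa using this
    exact ⟨hx_range, key⟩
  refine ⟨?_, part2⟩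
  rintro a ⟨n, hn1, hcond⟩
  have hnor : j a ∈ norSet j := ⟨1, le_refl 1, a, by rw [pow_one]⟩
  apply part2 (j a) hnor
  refine ⟨n, hn1, ?_⟩
  rwa [← hom_pow hj.1]

end ToricMonoid
end

section
/- For any pointed monoid A, the map MSpec(A_sn) → MSpec(A) induced by the seminormalization A → A_sn of a partially cancellative monoid A is a homeomorphism of topological spaces; concretely, p ↦ p̃ := {x ∈ A_sn | xⁿ ∈ p for n ≫ 0} is a continuous inverse on prime spectra. -/
universe u v

namespace ToricMonoid

lemma ideal_pow_mem {A : Type u} [CommMonoidWithZero A] {I : Set A} (hI : IsIdeal I)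
    {a : A} (ha : a ∈ I) : ∀ n : ℕ, 1 ≤ n → a ^ n ∈ I := by
  intro n hn
  cases n with
  | zero => omega
  | succ k => rw [pow_succ]; exact hI.2 _ _ ha

lemma prime_pow_not_mem {A : Type u} [CommMonoidWithZero A] {p : Set A}
    (hp : IsPrimeIdeal p) {a : A} (ha : a ∉ p) : ∀ n : ℕ, 1 ≤ n → a ^ n ∉ p := by
  intro n hn
  induction n with
  | zero => omega
  | succ k ih =>
    rcases Nat.eq_zero_or_pos k with hk | hk
    · subst hk; simpa using ha
    · rw [pow_succ]; exact hp.2.2 _ _ (ih hk) ha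

lemma prime_pow_mem_iff {A : Type u} [CommMonoidWithZero A] {p : Set A}
    (hp : IsPrimeIdeal p) {a : A} {n : ℕ} (hn : 1 ≤ n) : a ^ n ∈ p ↔ a ∈ p := by
  constructor
  · intro h; by_contra ha; exact prime_pow_not_mem hp ha n hn h
  · intro h; exact ideal_pow_mem hp.1 h n hn

lemma monoidHom_pow {A : Type u} {B : Type v} [CommMonoidWithZero A] [CommMonoidWithZero B]
    {i : A → B} (hi : IsMonoidHom i) (a : A) : ∀ n : ℕ, i (a ^ n) = i a ^ n := by
  intro n
  induction n with
  | zero => simpa using hi.2.1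
  | succ k ih => rw [pow_succ, pow_succ, hi.2.2, ih]

/-- For a partially cancellative monoid `A` with seminormalization
`i : A → A_sn`, the induced map `MSpec(A_sn) → MSpec(A)`, `q ↦ i⁻¹(q)`, is a
homeomorphism; concretely `p ↦ p̃ = {x ∈ A_sn | xⁿ ∈ p for n ≫ 0}` is a continuous
inverse. -/
theorem mspec_seminormalization_homeomorph {A : Type u} {B : Type v}
    [CommMonoidWithZero A] [CommMonoidWithZero B]
    (hpc : IsPC A) (i : A → B) (hi : IsSeminormalization i) :
    ∃ (Φ : MSpec B → MSpec A) (Ψ : MSpec A → MSpec B),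
      (∀ q : MSpec B, (Φ q).1 = i ⁻¹' q.1) ∧
      (∀ p : MSpec A,
        (Ψ p).1 = {x : B | ∃ N : ℕ, ∀ n ≥ N, ∃ a ∈ p.1, x ^ n = i a}) ∧
      Continuous Φ ∧ Continuous Ψ ∧
      Function.LeftInverse Ψ Φ ∧ Function.RightInverse Ψ Φ := by
  obtain ⟨hhom, hsn, hinj, hsur⟩ := hi
  have ipow := monoidHom_pow hhom
  -- Φ q := i⁻¹(q) is prime
  have hΦprime : ∀ q : MSpec B, IsPrimeIdeal (i ⁻¹' q.1) := by
    intro q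
    refine ⟨⟨?_, ?_⟩, ?_, ?_⟩
    · show i 0 ∈ q.1; rw [hhom.1]; exact q.2.1.1
    · intro a x hx; show i (a * x) ∈ q.1; rw [hhom.2.2]; exact q.2.1.2 _ _ hx
    · show i 1 ∉ q.1; rw [hhom.2.1]; exact q.2.2.1
    · intro a b ha hb; show i (a * b) ∉ q.1; rw [hhom.2.2]; exact q.2.2.2 _ _ ha hb
  -- independence of the representative
  have rep : ∀ (p : MSpec A) (x : B) (n m : ℕ) (a a' : A), 1 ≤ n → 1 ≤ m →
      x ^ n = i a → x ^ m = i a' → a ∈ p.1 → a' ∈ p.1 := by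
    intro p x n m a a' hn hm hxa hxa' hap
    have key : i (a ^ m) = i (a' ^ n) := by
      rw [ipow, ipow, ← hxa, ← hxa', ← pow_mul, ← pow_mul, Nat.mul_comm]
    obtain ⟨K, hK⟩ := (hinj _ _).mp key
    have h1 : (a ^ m) ^ (max K 1) = (a' ^ n) ^ (max K 1) := hK _ (le_max_left _ _)
    have hk1 : 1 ≤ max K 1 := le_max_right _ _
    have h2 : a ^ (m * max K 1) ∈ p.1 := ideal_pow_mem p.2.1 hap _ (Nat.mul_pos hm hk1)
    rw [pow_mul, h1, ← pow_mul] at h2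
    exact (prime_pow_mem_iff p.2 (Nat.mul_pos hn hk1)).mp h2
  set Ψs : MSpec A → Set B :=
    fun p => {x : B | ∃ N : ℕ, ∀ n ≥ N, ∃ a ∈ p.1, x ^ n = i a} with hΨs
  -- key characterization: i a ∈ Ψs p ↔ a ∈ p
  have memΨ : ∀ (p : MSpec A) (a : A), i a ∈ Ψs p ↔ a ∈ p.1 := by
    intro p a
    constructor
    · rintro ⟨N, hN⟩
      obtain ⟨b, hbp, hb⟩ := hN (max N 1) (le_max_left _ _)
      rw [← ipow] at hb
      obtain ⟨K, hK⟩ := (hinj _ _).mp hb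
      have h1 : (a ^ max N 1) ^ (max K 1) = b ^ (max K 1) := hK _ (le_max_left _ _)
      have hb2 : b ^ (max K 1) ∈ p.1 := ideal_pow_mem p.2.1 hbp _ (le_max_right _ _)
      rw [← h1, ← pow_mul] at hb2
      exact (prime_pow_mem_iff p.2
        (Nat.mul_pos (le_max_right N 1) (le_max_right K 1))).mp hb2
    · intro ha
      exact ⟨1, fun n hn => ⟨a ^ n, ideal_pow_mem p.2.1 ha n hn, (ipow a n).symm⟩⟩
  -- Ψs p is prime
  have hΨprime : ∀ p : MSpec A, IsPrimeIdeal (Ψs p) := by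
    intro p
    refine ⟨⟨?_, ?_⟩, ?_, ?_⟩
    · exact ⟨1, fun n hn => ⟨0, p.2.1.1, by
        rw [zero_pow (by omega : n ≠ 0), hhom.1]⟩⟩
    · rintro b x ⟨N, hN⟩
      obtain ⟨Nb, hNb⟩ := hsur b
      refine ⟨max N Nb, fun n hn => ?_⟩
      obtain ⟨a, hap, hxa⟩ := hN n (le_trans (le_max_left _ _) hn)
      obtain ⟨c, hc⟩ := hNb n (le_trans (le_max_right _ _) hn)
      exact ⟨c * a, p.2.1.2 _ _ hap, by rw [mul_pow, hxa, hc, hhom.2.2]⟩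
    · rintro ⟨N, hN⟩
      obtain ⟨a, hap, ha⟩ := hN (max N 1) (le_max_left _ _)
      rw [one_pow] at ha
      have : i a = i 1 := by rw [← ha, hhom.2.1]
      obtain ⟨K, hK⟩ := (hinj _ _).mp this
      have h1 : a ^ (max K 1) = 1 := by
        have := hK _ (le_max_left K 1); rwa [one_pow] at this
      have : (1 : A) ∈ p.1 := by
        rw [← h1]; exact ideal_pow_mem p.2.1 hap _ (le_max_right _ _)
      exact p.2.2.1 this
    · intro x y hx hy
      rintro ⟨N, hN⟩
      obtain ⟨Nx, hNx⟩ := hsur x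
      obtain ⟨Ny, hNy⟩ := hsur y
      set n := max (max N 1) (max Nx Ny) with hn
      have hn1 : 1 ≤ n := le_trans (le_max_right N 1) (le_max_left _ _)
      obtain ⟨c, hcp, hc⟩ := hN n (le_trans (le_max_left _ _) (le_max_left _ _))
      obtain ⟨a, ha⟩ := hNx n (le_trans (le_max_left Nx Ny) (le_max_right _ _))
      obtain ⟨b, hb⟩ := hNy n (le_trans (le_max_right Nx Ny) (le_max_right _ _))
      have key : i (a * b) = i c := by
        rw [hhom.2.2, ← ha, ← hb, ← mul_pow, hc]
      obtain ⟨K, hK⟩ := (hinj _ _).mp key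
      have h1 : (a * b) ^ (max K 1) = c ^ (max K 1) := hK _ (le_max_left _ _)
      have hab : a * b ∈ p.1 := by
        have : (a * b) ^ (max K 1) ∈ p.1 := by
          rw [h1]; exact ideal_pow_mem p.2.1 hcp _ (le_max_right _ _)
        exact (prime_pow_mem_iff p.2 (le_max_right K 1)).mp this
      have hor : a ∈ p.1 ∨ b ∈ p.1 := by
        by_contra h
        push_neg at h
        exact p.2.2.2 _ _ h.1 h.2 hab
      rcases hor with hA | hB
      · refine hx ⟨max Nx 1, fun m hm => ?_⟩
        obtain ⟨am, ham⟩ := hNx m (le_trans (le_max_left _ _) hm)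
        exact ⟨am, rep p x n m a am hn1 (le_trans (le_max_right Nx 1) hm)
          ha ham hA, ham⟩
      · refine hy ⟨max Ny 1, fun m hm => ?_⟩
        obtain ⟨bm, hbm⟩ := hNy m (le_trans (le_max_left _ _) hm)
        exact ⟨bm, rep p y n m b bm hn1 (le_trans (le_max_right Ny 1) hm)
          hb hbm hB, hbm⟩
  set Φ : MSpec B → MSpec A := fun q => ⟨i ⁻¹' q.1, hΦprime q⟩ with hΦ
  set Ψ : MSpec A → MSpec B := fun p => ⟨Ψs p, hΨprime p⟩ with hΨdef
  refine ⟨Φ, Ψ, fun q => rfl, fun p => rfl, ?_, ?_, ?_, ?_⟩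
  · -- continuity of Φ
    apply continuous_generateFrom_iff.mpr
    rintro U ⟨I, hI, rfl⟩
    set J : Set B := {b : B | ∃ a ∈ I, ∃ c : B, b = c * i a} with hJ
    have hJI : IsIdeal J := by
      constructor
      · exact ⟨0, hI.1, 0, by rw [hhom.1, mul_zero]⟩
      · rintro d b ⟨a, ha, c, rfl⟩
        exact ⟨a, ha, d * c, (mul_assoc d c (i a)).symm⟩
    have heq : Φ ⁻¹' {p : MSpec A | ¬ I ⊆ p.1} = {q : MSpec B | ¬ J ⊆ q.1} := by
      ext q
      simp only [Set.mem_preimage, Set.mem_setOf_eq, Set.not_subset]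
      constructor
      · rintro ⟨a, haI, haq⟩
        exact ⟨i a, ⟨a, haI, 1, (one_mul _).symm⟩, haq⟩
      · rintro ⟨b, ⟨a, haI, c, rfl⟩, hbq⟩
        refine ⟨a, haI, fun hia => hbq (q.2.1.2 _ _ hia)⟩
    rw [heq]
    exact TopologicalSpace.isOpen_generateFrom_of_mem ⟨J, hJI, rfl⟩
  · -- continuity of Ψ
    apply continuous_generateFrom_iff.mpr
    rintro U ⟨J, hJ, rfl⟩
    set I : Set A := i ⁻¹' J with hIdef
    have hII : IsIdeal I := by
      constructor
      · show i 0 ∈ J; rw [hhom.1]; exact hJ.1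
      · intro a x hx; show i (a * x) ∈ J; rw [hhom.2.2]; exact hJ.2 _ _ hx
    have heq : Ψ ⁻¹' {q : MSpec B | ¬ J ⊆ q.1} = {p : MSpec A | ¬ I ⊆ p.1} := by
      ext p
      simp only [Set.mem_preimage, Set.mem_setOf_eq, Set.not_subset]
      constructor
      · rintro ⟨b, hbJ, hbΨ⟩
        obtain ⟨Nb, hNb⟩ := hsur b
        obtain ⟨a, ha⟩ := hNb (max Nb 1) (le_max_left _ _)
        refine ⟨a, ?_, ?_⟩
        · show i a ∈ J
          rw [← ha]; exact ideal_pow_mem hJ hbJ _ (le_max_right _ _)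
        · intro hap
          refine hbΨ ⟨max Nb 1, fun m hm => ?_⟩
          obtain ⟨am, ham⟩ := hNb m (le_trans (le_max_left _ _) hm)
          exact ⟨am, rep p b (max Nb 1) m a am (le_max_right _ _)
            (le_trans (le_max_right Nb 1) hm) ha ham hap, ham⟩
      · rintro ⟨a, haI, hap⟩
        exact ⟨i a, haI, fun h => hap ((memΨ p a).mp h)⟩
    rw [heq]
    exact TopologicalSpace.isOpen_generateFrom_of_mem ⟨I, hII, rfl⟩
  · -- left inverse: Ψ (Φ q) = q
    intro q
    apply Subtype.ext
    ext x
    constructor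
    · rintro ⟨N, hN⟩
      obtain ⟨a, haq, hxa⟩ := hN (max N 1) (le_max_left _ _)
      have : x ^ (max N 1) ∈ q.1 := by rw [hxa]; exact haq
      exact (prime_pow_mem_iff q.2 (le_max_right N 1)).mp this
    · intro hx
      obtain ⟨Nx, hNx⟩ := hsur x
      refine ⟨max Nx 1, fun n hn => ?_⟩
      obtain ⟨a, ha⟩ := hNx n (le_trans (le_max_left _ _) hn)
      refine ⟨a, ?_, ha⟩
      show i a ∈ q.1
      rw [← ha]
      exact ideal_pow_mem q.2.1 hx n (le_trans (le_max_right Nx 1) hn)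
  · -- right inverse: Φ (Ψ p) = p
    intro p
    apply Subtype.ext
    ext a
    exact memΨ p a

end ToricMonoid
end
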